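/- Let λ > 1 and 0 < σ_u < 1 with log σ_u / log λ irrational, and let Δ > 1, ε > 0 with ε < Δ − 1. Then there exist positive integers n⁻ < n⁺ and m⁻ < m⁺ such that: (i) n⁻ ≥ 1/ε and m⁻ ≥ 1/ε; (ii) both σ_u^{n⁻} λ^{m⁻} and σ_u^{n⁺} λ^{m⁺} lie in [Δ − ε, Δ + ε]; and (iii) σ_u^{n⁺−n⁻} ≤ ε. -/
import Mathlib

lemma step_lemma (β t s : ℝ) (hβ : 0 < β) (hst : s ≤ t) :
    ∃ i : ℕ, t ≤ s + i * β ∧ s + i * β < t + β := by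
  have h0 : (0:ℤ) ≤ ⌈(t - s) / β⌉ := Int.ceil_nonneg (div_nonneg (by linarith) hβ.le)
  refine ⟨⌈(t - s) / β⌉.toNat, ?_, ?_⟩
  · have h1 : ((t - s) / β) ≤ ((⌈(t - s) / β⌉.toNat : ℤ) : ℝ) := by
      rw [Int.toNat_of_nonneg h0]; exact Int.le_ceil _
    rw [div_le_iff₀ hβ] at h1
    push_cast at h1
    linarith
  · have h1 : ((⌈(t - s) / β⌉.toNat : ℤ) : ℝ) < (t - s) / β + 1 := by
      rw [Int.toNat_of_nonneg h0]; exact Int.ceil_lt_add_one _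
    have h2 := mul_lt_mul_of_pos_right h1 hβ
    rw [add_mul, div_mul_cancel₀ _ hβ.ne'] at h2
    push_cast at h2
    linarith

lemma key_pos (α t δ : ℝ) (k : ℕ) (j : ℤ) (hk : 1 ≤ k)
    (h1 : 0 < (k:ℝ) * α - j) (h2 : (k:ℝ) * α - j < δ) (N : ℕ) :
    ∃ n : ℕ, ∃ m : ℤ, N ≤ n ∧ t ≤ (n:ℝ) * α - m ∧ (n:ℝ) * α - m < t + δ := by
  set β : ℝ := (k:ℝ) * α - j with hβdef
  set M : ℤ := ⌈(N:ℝ) * β - t⌉ with hM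
  have hsM : (N:ℝ) * β ≤ t + M := by
    have := Int.le_ceil ((N:ℝ) * β - t); rw [← hM] at this; linarith
  obtain ⟨i, hi1, hi2⟩ := step_lemma β (t + M) ((N:ℝ) * β) h1 hsM
  have heq : ((((N + i) * k : ℕ)) : ℝ) * α - ((((N:ℤ) + (i:ℤ)) * j + M : ℤ) : ℝ)
      = (N:ℝ) * β + (i:ℝ) * β - (M:ℝ) := by
    rw [hβdef]; push_cast; ring
  refine ⟨(N + i) * k, ((N:ℤ) + (i:ℤ)) * j + M, ?_, ?_, ?_⟩
  · calc N ≤ N + i := Nat.le_add_right _ _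
      _ ≤ (N + i) * k := Nat.le_mul_of_pos_right _ hk
  · rw [heq]; linarith
  · rw [heq]; linarith

lemma key (α t δ : ℝ) (hα : Irrational α) (hδ : 0 < δ) (N : ℕ) :
    ∃ n : ℕ, ∃ m : ℤ, N ≤ n ∧ |(n:ℝ) * α - m - t| ≤ δ := by
  obtain ⟨Q, hQ⟩ := exists_nat_one_div_lt hδ
  obtain ⟨j, k, hk0, hkQ, hjk⟩ := Real.exists_int_int_abs_mul_sub_le α (Nat.succ_pos Q)
  have hkn : 1 ≤ k.toNat := by omega
  have hcast : ((k.toNat : ℕ) : ℝ) = (k : ℝ) := by exact_mod_cast Int.toNat_of_nonneg hk0.le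
  have hβδ : |(k.toNat : ℝ) * α - j| < δ := by
    rw [hcast]
    calc |(k:ℝ) * α - j| ≤ 1 / ((Q:ℝ) + 1 + 1) := by
          convert hjk using 3; push_cast; ring
      _ < 1 / ((Q:ℝ) + 1) := by
          apply div_lt_div_of_pos_left one_pos (by positivity); linarith
      _ < δ := hQ
  have hβne : (k.toNat : ℝ) * α - j ≠ 0 := by
    intro h
    have hk' : (0:ℝ) < (k.toNat : ℝ) := by exact_mod_cast hkn
    have hα' : α = (j : ℝ) / (k.toNat : ℝ) := by
      field_simp; linarith
    exact hα ⟨(j : ℚ) / (k.toNat : ℚ), by push_cast; rw [hα']⟩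
  rcases lt_or_gt_of_ne hβne with hneg | hpos
  · have h1 : 0 < (k.toNat:ℝ) * (-α) - (((-j : ℤ)):ℝ) := by push_cast; linarith
    have h2 : (k.toNat:ℝ) * (-α) - (((-j : ℤ)):ℝ) < δ := by
      have := abs_lt.mp hβδ; push_cast; linarith [this.1]
    obtain ⟨n, m, hn, hm1, hm2⟩ := key_pos (-α) (-t) δ k.toNat (-j) hkn h1 h2 N
    refine ⟨n, -m, hn, ?_⟩
    rw [abs_le]; push_cast at hm1 hm2 ⊢; constructor <;> linarith
  · have h2 : (k.toNat : ℝ) * α - j < δ := lt_of_le_of_lt (le_abs_self _) hβδ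
    obtain ⟨n, m, hn, hm1, hm2⟩ := key_pos α t δ k.toNat j hkn hpos h2 N
    exact ⟨n, m, hn, by rw [abs_le]; constructor <;> linarith⟩

/-- Simultaneous tuning of two pairs of exponents: `(n⁻, m⁻)` and `(n⁺, m⁺)` with
`n⁻, m⁻ ≥ 1/ε`, both products `σ_u^n λ^m` in `[Δ-ε, Δ+ε]`, and `σ_u^{n⁺-n⁻} ≤ ε`. -/
theorem stmt2 (lam σu Δ ε : ℝ) (hlam : 1 < lam) (hσ0 : 0 < σu) (hσ1 : σu < 1)
    (hirr : Irrational (Real.log σu / Real.log lam)) (hΔ : 1 < Δ) (hε : 0 < ε)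
    (hεΔ : ε < Δ - 1) :
    ∃ nm np mm mp : ℕ, nm < np ∧ mm < mp ∧ 0 < nm ∧ 0 < mm ∧
      1 / ε ≤ (nm : ℝ) ∧ 1 / ε ≤ (mm : ℝ) ∧
      σu ^ nm * lam ^ mm ∈ Set.Icc (Δ - ε) (Δ + ε) ∧
      σu ^ np * lam ^ mp ∈ Set.Icc (Δ - ε) (Δ + ε) ∧
      σu ^ (np - nm) ≤ ε := by
  set L := Real.log lam with hLdef
  set S := Real.log σu with hSdef
  have hL : 0 < L := Real.log_pos hlam
  have hS : S < 0 := Real.log_neg hσ0 hσ1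
  set α : ℝ := -S / L with hαdef
  have hα : Irrational α := by rw [hαdef, neg_div]; exact hirr.neg
  have hαpos : 0 < α := div_pos (by linarith) hL
  have hΔm : (1:ℝ) < Δ - ε := by linarith
  have hΔp : (0:ℝ) < Δ + ε := by linarith
  set c : ℝ := Real.log Δ / L with hcdef
  have hc : 0 < c := div_pos (Real.log_pos hΔ) hL
  set δ : ℝ := min ((Real.log Δ - Real.log (Δ - ε)) / L)
      ((Real.log (Δ + ε) - Real.log Δ) / L) with hδdef
  have hδ : 0 < δ := lt_min
    (div_pos (sub_pos.2 (Real.log_lt_log (by linarith) (by linarith))) hL)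
    (div_pos (sub_pos.2 (Real.log_lt_log (by linarith) (by linarith))) hL)
  have hδ1 : δ * L ≤ Real.log Δ - Real.log (Δ - ε) :=
    (le_div_iff₀ hL).mp (min_le_left _ _)
  have hδ2 : δ * L ≤ Real.log (Δ + ε) - Real.log Δ :=
    (le_div_iff₀ hL).mp (min_le_right _ _)
  -- membership criterion
  have hmem : ∀ (n m : ℕ), |(n:ℝ) * α - (m:ℝ) + c| ≤ δ →
      σu ^ n * lam ^ m ∈ Set.Icc (Δ - ε) (Δ + ε) := by
    intro n m h
    have hpos : 0 < σu ^ n * lam ^ m := by positivity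
    have hlog : Real.log (σu ^ n * lam ^ m) = n * S + m * L := by
      rw [Real.log_mul (by positivity) (by positivity), Real.log_pow, Real.log_pow,
        ← hSdef, ← hLdef]
    have hexp : (n:ℝ) * S + m * L - Real.log Δ = -(((n:ℝ) * α - m + c) * L) := by
      rw [hαdef, hcdef]; field_simp; ring
    have habs : |(n:ℝ) * S + m * L - Real.log Δ| ≤ δ * L := by
      rw [hexp, abs_neg, abs_mul, abs_of_pos hL]
      exact mul_le_mul_of_nonneg_right h hL.le
    have habs' := abs_le.mp habs
    constructor
    · rw [← Real.log_le_log_iff (by linarith) hpos, hlog]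
      linarith [habs'.2]
    · rw [← Real.log_le_log_iff hpos hΔp, hlog]
      linarith [habs'.1]
  obtain ⟨K, hK⟩ := exists_pow_lt_of_lt_one hε hσ1
  set N : ℕ := max (max ⌈1/ε⌉₊ 1) ⌈(1/ε + δ + 1)/α⌉₊ with hNdef
  have hNα : 1/ε + δ + 1 ≤ (N:ℝ) * α := by
    have h1 : ((1/ε + δ + 1)/α) ≤ (⌈(1/ε + δ + 1)/α⌉₊ : ℝ) := Nat.le_ceil _
    have h2 : (⌈(1/ε + δ + 1)/α⌉₊ : ℝ) ≤ (N:ℝ) := by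
      exact_mod_cast le_max_right _ _
    rw [div_le_iff₀ hαpos] at h1
    have h3 := mul_le_mul_of_nonneg_right h2 hαpos.le
    linarith
  obtain ⟨nm, m1, hnmN, hnm⟩ := key α (-c) δ hα hδ N
  rw [sub_neg_eq_add] at hnm
  set K' : ℕ := max (max K 1) ⌈(2*δ + 1)/α⌉₊ with hK'def
  have hK'α : 2*δ + 1 ≤ (K':ℝ) * α := by
    have h1 : ((2*δ + 1)/α) ≤ (⌈(2*δ + 1)/α⌉₊ : ℝ) := Nat.le_ceil _
    have h2 : (⌈(2*δ + 1)/α⌉₊ : ℝ) ≤ (K':ℝ) := by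
      exact_mod_cast le_max_right _ _
    rw [div_le_iff₀ hαpos] at h1
    have h3 := mul_le_mul_of_nonneg_right h2 hαpos.le
    linarith
  obtain ⟨np, m2, hnpN, hnp⟩ := key α (-c) δ hα hδ (nm + K')
  rw [sub_neg_eq_add] at hnp
  have hnm' := abs_le.mp hnm
  have hnp' := abs_le.mp hnp
  -- basic real bounds
  have hnmα : (N:ℝ) * α ≤ (nm:ℝ) * α :=
    mul_le_mul_of_nonneg_right (by exact_mod_cast hnmN) hαpos.le
  have hnpα : ((nm:ℝ) + K') * α ≤ (np:ℝ) * α := by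
    apply mul_le_mul_of_nonneg_right _ hαpos.le
    exact_mod_cast hnpN
  have hm1lb : 1/ε + 1 ≤ (m1:ℝ) := by linarith [hnm'.2, hnmα, hNα, hc]
  have hm1pos : 0 < m1 := by
    have : (0:ℝ) < (m1:ℝ) := by
      have : (0:ℝ) < 1/ε := by positivity
      linarith
    exact_mod_cast this
  have hexpand : ((nm:ℝ) + K') * α = (nm:ℝ)*α + (K':ℝ)*α := by ring
  have hm2gt : (m1:ℝ) + 1 ≤ (m2:ℝ) := by linarith [hnm'.1, hnp'.2, hnpα, hK'α]
  have hm2pos : 0 < m2 := by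
    have : (0:ℝ) < (m2:ℝ) := by
      have : (0:ℝ) < 1/ε := by positivity
      linarith
    exact_mod_cast this
  have hmmcast : ((m1.toNat : ℕ) : ℝ) = (m1:ℝ) := by
    exact_mod_cast Int.toNat_of_nonneg hm1pos.le
  have hmpcast : ((m2.toNat : ℕ) : ℝ) = (m2:ℝ) := by
    exact_mod_cast Int.toNat_of_nonneg hm2pos.le
  have hK'1 : 1 ≤ K' := le_trans (le_max_right _ _) (le_max_left _ _)
  have hKK' : K ≤ K' := le_trans (le_max_left _ _) (le_max_left _ _)
  refine ⟨nm, np, m1.toNat, m2.toNat, ?_, ?_, ?_, ?_, ?_, ?_, ?_, ?_, ?_⟩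
  · omega
  · have : (m1:ℝ) < (m2:ℝ) := by linarith
    have : m1 < m2 := by exact_mod_cast this
    omega
  · have hN1 : 1 ≤ N := le_trans (le_max_right _ _) (le_max_left _ _)
    omega
  · omega
  · have h1 : 1/ε ≤ (⌈1/ε⌉₊ : ℝ) := Nat.le_ceil _
    have h2 : (⌈1/ε⌉₊ : ℝ) ≤ (nm:ℝ) := by
      have : ⌈1/ε⌉₊ ≤ nm := le_trans (le_trans (le_max_left _ _) (le_max_left _ _)) hnmN
      exact_mod_cast this
    linarith
  · rw [hmmcast]; linarith
  · apply hmem; rw [hmmcast]; exact hnm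
  · apply hmem; rw [hmpcast]; exact hnp
  · calc σu ^ (np - nm) ≤ σu ^ K :=
        pow_le_pow_of_le_one hσ0.le hσ1.le (by omega)
      _ ≤ ε := hK.le
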